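/- Let (ω_j) be a homogeneous Poisson point process on ℝ^d with unit intensity and let γ > d. There is a constant C = C(γ, d) such that for all ε > 0, all r > 1, and all R > C ε^{−1/(γ−d)} ∨ 2r, P( sup_{y ∈ B(0,r)} Σ_{ω_j ∉ B(0,R)} |y − ω_j|^{−γ} > ε ) ≤ exp(−4 ε R^γ). -/

import Mathlib

/-!
Split the complement of `B(0, R)` into the dyadic shells `A_k = {2^k R ≤ |z| < 2^(k+1) R}`.
For `|y| ≤ R/2` every point of `A_k` is at distance at least `2^k R / 2` from `y`, so the
potential is at most `∑_k (2^k R / 2)^(-γ) N(A_k)`, and this is `≤ ε` as soon as every `N(A_k)`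
stays below a threshold `m_k ∝ ε R^γ 2^(k d)`. Because `γ > d`, once `ε R^(γ-d)` is large the
threshold `m_k` exceeds `e^(1+L)` times the mean `|A_k| = O(R^d 2^(k d))` of the Poisson variable
`N(A_k)`, and the Chernoff bound `P(N(A_k) > m_k) ≤ e^(-L m_k) ≤ e^(-5 ε R^γ - k)` summed over `k`
gives the claim.
-/

open MeasureTheory ProbabilityTheory
open scoped ENNReal

/-- A Poisson point process on `E` with intensity measure `μ`. -/
def IsPoissonPP {Ω E : Type*} [MeasurableSpace Ω] [MeasurableSpace E]
    (P : Measure Ω) (N : Ω → Measure E) (μ : Measure E) : Prop :=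
  (∀ A : Set E, MeasurableSet A → Measurable fun ω => N ω A) ∧
  (∀ A : Set E, MeasurableSet A → μ A < ⊤ → ∀ n : ℕ,
      P {ω | N ω A = n}
        = ENNReal.ofReal (Real.exp (-(μ A).toReal) * (μ A).toReal ^ n / n.factorial)) ∧
  (∀ (k : ℕ) (A : Fin k → Set E), (∀ i, MeasurableSet (A i)) →
      Pairwise (Function.onFun Disjoint A) →
      iIndepFun (m := fun _ => (inferInstance : MeasurableSpace ℝ≥0∞))
        (fun i ω => N ω (A i)) P)

section DyadicShells

variable {E : Type*} [NormedAddCommGroup E]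

def dyadicShell (R : ℝ) (k : ℕ) : Set E := {z | 2 ^ k * R ≤ ‖z‖ ∧ ‖z‖ < 2 ^ (k + 1) * R}

lemma measurableSet_dyadicShell [MeasurableSpace E] [OpensMeasurableSpace E] (R : ℝ) (k : ℕ) :
    MeasurableSet (dyadicShell R k : Set E) :=
  measurable_norm measurableSet_Ico

lemma dyadicShell_subset_ball (R : ℝ) (k : ℕ) :
    (dyadicShell R k : Set E) ⊆ Metric.ball 0 (2 ^ (k + 1) * R) :=
  fun _ hz => mem_ball_zero_iff.2 hz.2

lemma measure_dyadicShell_toReal_le [NormedSpace ℝ E] [MeasurableSpace E] [BorelSpace E]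
    [FiniteDimensional ℝ E] (μ : Measure E) [μ.IsAddHaarMeasure] {d : ℕ}
    (hE : Module.finrank ℝ E = d) {R : ℝ} (hR : 0 < R) (k : ℕ) :
    (μ (dyadicShell R k)).toReal ≤ (μ (Metric.ball 0 1)).toReal * 2 ^ d * R ^ d * (2 ^ k) ^ d := by
  have hball := μ.addHaar_ball_of_pos (0 : E) (by positivity : (0 : ℝ) < 2 ^ (k + 1) * R)
  calc (μ (dyadicShell R k)).toReal
      ≤ (μ (Metric.ball 0 (2 ^ (k + 1) * R))).toReal :=
        ENNReal.toReal_mono measure_ball_lt_top.ne (measure_mono (dyadicShell_subset_ball R k))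
    _ = _ := by
        rw [hball, hE, ENNReal.toReal_mul, ENNReal.toReal_ofReal (by positivity)]
        ring

lemma exists_mem_dyadicShell {R : ℝ} {z : E} (hR : 0 < R) (hz : R ≤ ‖z‖) :
    ∃ k, z ∈ dyadicShell R k := by
  obtain ⟨k, hk⟩ := exists_nat_pow_near ((one_le_div hR).2 hz) one_lt_two
  exact ⟨k, (le_div_iff₀ hR).1 hk.1, (div_lt_iff₀ hR).1 hk.2⟩

lemma half_norm_le_norm_sub {y z : E} (h : ‖y‖ ≤ ‖z‖ / 2) : ‖z‖ / 2 ≤ ‖y - z‖ := by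
  have := norm_sub_norm_le z y
  rw [norm_sub_rev] at this
  linarith

lemma lintegral_tail_le_tsum_dyadicShell [MeasurableSpace E] [OpensMeasurableSpace E]
    (ν : Measure E) {R γ : ℝ} (hR : 0 < R) (hγ : 0 ≤ γ) {y : E} (hy : ‖y‖ ≤ R / 2) :
    ∫⁻ z, (if ‖z‖ ≥ R then ENNReal.ofReal (‖y - z‖ ^ (-γ)) else 0) ∂ν
      ≤ ∑' k : ℕ, ENNReal.ofReal ((2 ^ k * R / 2) ^ (-γ)) * ν (dyadicShell R k) := by
  calc ∫⁻ z, (if ‖z‖ ≥ R then ENNReal.ofReal (‖y - z‖ ^ (-γ)) else 0) ∂ν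
      ≤ ∫⁻ z, ∑' k : ℕ, (dyadicShell R k).indicator
          (fun _ => ENNReal.ofReal ((2 ^ k * R / 2) ^ (-γ))) z ∂ν := by
        refine lintegral_mono fun z => ?_
        split_ifs with hz
        · obtain ⟨k, hk⟩ := exists_mem_dyadicShell hR hz
          have hdist : 2 ^ k * R / 2 ≤ ‖y - z‖ :=
            (div_le_div_of_nonneg_right hk.1 zero_le_two).trans
              (half_norm_le_norm_sub (by linarith))
          refine le_trans ?_ (ENNReal.le_tsum k)
          rw [Set.indicator_of_mem hk]
          exact ENNReal.ofReal_le_ofReal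
            (Real.rpow_le_rpow_of_nonpos (by positivity) hdist (neg_nonpos.2 hγ))
        · exact zero_le
    _ = ∑' k : ℕ, ENNReal.ofReal ((2 ^ k * R / 2) ^ (-γ)) * ν (dyadicShell R k) := by
        rw [lintegral_tsum fun k => (measurable_const.indicator
          (measurableSet_dyadicShell R k)).aemeasurable]
        exact tsum_congr fun k => lintegral_indicator_const (measurableSet_dyadicShell R k) _

lemma hasSum_dyadic_weight_mul_threshold {R γ : ℝ} {d : ℕ} (hR : 0 < R) (hdγ : (d : ℝ) < γ)
    (ε : ℝ) :
    HasSum (fun k : ℕ => (2 ^ k * R / 2) ^ (-γ) *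
      ((1 - 2 ^ ((d : ℝ) - γ)) * ε * (R / 2) ^ γ * (2 ^ k) ^ d)) ε := by
  set q : ℝ := 2 ^ ((d : ℝ) - γ)
  have hq1 : q < 1 := Real.rpow_lt_one_of_one_lt_of_neg one_lt_two (by linarith)
  have hterm : ∀ k : ℕ, (2 ^ k * R / 2) ^ (-γ) *
      ((1 - q) * ε * (R / 2) ^ γ * (2 ^ k) ^ d) = ε * (1 - q) * q ^ k := by
    intro k
    have h2k : ((2 : ℝ) ^ k) ^ (-γ) * ((2 : ℝ) ^ k) ^ d = q ^ k := by
      rw [← Real.rpow_natCast _ d, ← Real.rpow_add (by positivity), neg_add_eq_sub,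
        Real.rpow_pow_comm zero_le_two]
    have hR2 : (R / 2) ^ (-γ) * (R / 2) ^ γ = 1 := by
      rw [Real.rpow_neg (by positivity), inv_mul_cancel₀ (by positivity)]
    rw [mul_div_assoc, Real.mul_rpow (by positivity) (by positivity), ← h2k]
    linear_combination ((1 - q) * ε * ((2 : ℝ) ^ k) ^ (-γ) * ((2 : ℝ) ^ k) ^ d) * hR2
  simp_rw [hterm]
  have := (hasSum_geometric_of_lt_one (by positivity) hq1).mul_left (ε * (1 - q))
  rwa [mul_assoc, mul_inv_cancel₀ (sub_pos.2 hq1).ne', mul_one] at this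

lemma lintegral_tail_le_of_forall_dyadicShell_le [MeasurableSpace E] [OpensMeasurableSpace E]
    (ν : Measure E) {R γ ε : ℝ} {d : ℕ}
    (hR : 0 < R) (hdγ : (d : ℝ) < γ) (hε : 0 ≤ ε)
    (hν : ∀ k, ν (dyadicShell R k) ≤
      ENNReal.ofReal ((1 - 2 ^ ((d : ℝ) - γ)) * ε * (R / 2) ^ γ * (2 ^ k) ^ d))
    {y : E} (hy : ‖y‖ ≤ R / 2) :
    ∫⁻ z, (if ‖z‖ ≥ R then ENNReal.ofReal (‖y - z‖ ^ (-γ)) else 0) ∂ν ≤ ENNReal.ofReal ε := by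
  have hsum := hasSum_dyadic_weight_mul_threshold hR hdγ ε
  have hq : 0 ≤ 1 - (2 : ℝ) ^ ((d : ℝ) - γ) :=
    sub_nonneg.2 (Real.rpow_le_one_of_one_le_of_nonpos one_le_two (by linarith))
  calc ∫⁻ z, (if ‖z‖ ≥ R then ENNReal.ofReal (‖y - z‖ ^ (-γ)) else 0) ∂ν
      ≤ ∑' k : ℕ, ENNReal.ofReal ((2 ^ k * R / 2) ^ (-γ)) * ν (dyadicShell R k) :=
        lintegral_tail_le_tsum_dyadicShell ν hR (by linarith [d.cast_nonneg (α := ℝ)]) hy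
    _ ≤ ∑' k : ℕ, ENNReal.ofReal ((2 ^ k * R / 2) ^ (-γ) *
          ((1 - 2 ^ ((d : ℝ) - γ)) * ε * (R / 2) ^ γ * (2 ^ k) ^ d)) := by
        refine ENNReal.tsum_le_tsum fun k => ?_
        rw [ENNReal.ofReal_mul (by positivity)]
        gcongr
        exact hν k
    _ = ENNReal.ofReal ε := by
        rw [← ENNReal.ofReal_tsum_of_nonneg (fun k => by positivity) hsum.summable, hsum.tsum_eq]

end DyadicShells

section PoissonTail

variable {Ω : Type*} [MeasurableSpace Ω] {P : Measure Ω} [IsProbabilityMeasure P]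
  {X : Ω → ℝ≥0∞} {lam : ℝ}

lemma Real.hasSum_pow_div_factorial (x : ℝ) :
    HasSum (fun n : ℕ => x ^ n / n.factorial) (Real.exp x) := by
  rw [Real.exp_eq_exp_ℝ]
  exact NormedSpace.expSeries_div_hasSum_exp x

lemma ae_exists_eq_natCast_of_poisson (hX : Measurable X) (hlam : 0 ≤ lam)
    (hpmf : ∀ n : ℕ, P {ω | X ω = n} =
      ENNReal.ofReal (Real.exp (-lam) * lam ^ n / n.factorial)) :
    ∀ᵐ ω ∂P, ∃ n : ℕ, X ω = n := by
  have hmeas : ∀ n : ℕ, MeasurableSet {ω | X ω = n} := fun n => hX (measurableSet_singleton _)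
  have hdisj : Pairwise (Function.onFun Disjoint fun n : ℕ => {ω | X ω = n}) := fun a b hab =>
    Set.disjoint_left.2 fun ω ha hb => hab (Nat.cast_injective (ha.symm.trans hb))
  have hsum : HasSum (fun n : ℕ => Real.exp (-lam) * lam ^ n / n.factorial) 1 := by
    simpa [mul_div_assoc, ← Real.exp_add] using
      (Real.hasSum_pow_div_factorial lam).mul_left (Real.exp (-lam))
  have hone : P (⋃ n : ℕ, {ω | X ω = n}) = 1 := by
    rw [measure_iUnion hdisj hmeas]
    simp_rw [hpmf]
    rw [← ENNReal.ofReal_tsum_of_nonneg (fun n => by positivity) hsum.summable, hsum.tsum_eq,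
      ENNReal.ofReal_one]
  filter_upwards [(mem_ae_iff_prob_eq_one (MeasurableSet.iUnion hmeas)).2 hone] with ω hω
  exact Set.mem_iUnion.1 hω

lemma measure_ofReal_lt_le_exp_of_poisson (hX : Measurable X) (hlam : 0 ≤ lam)
    (hpmf : ∀ n : ℕ, P {ω | X ω = n} =
      ENNReal.ofReal (Real.exp (-lam) * lam ^ n / n.factorial))
    {m t : ℝ} (hm : 0 ≤ m) (ht : 0 ≤ t) :
    P {ω | ENNReal.ofReal m < X ω} ≤ ENNReal.ofReal (Real.exp (lam * Real.exp t - t * m)) := by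
  set p : ℕ → ℝ := fun n => Real.exp (-lam - t * m) * (lam * Real.exp t) ^ n / n.factorial
  have hp : HasSum p (Real.exp (-lam - t * m) * Real.exp (lam * Real.exp t)) := by
    simpa [p, mul_div_assoc] using
      (Real.hasSum_pow_div_factorial (lam * Real.exp t)).mul_left (Real.exp (-lam - t * m))
  have hcover : {ω | ENNReal.ofReal m < X ω} ≤ᵐ[P] ⋃ n : ℕ, {ω | X ω = n ∧ m < n} := by
    filter_upwards [ae_exists_eq_natCast_of_poisson hX hlam hpmf] with ω ⟨n, hn⟩ hω
    refine Set.mem_iUnion.2 ⟨n, hn, ?_⟩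
    have hω : ENNReal.ofReal m < X ω := hω
    rw [hn, ← ENNReal.ofReal_natCast] at hω
    exact (ENNReal.ofReal_lt_ofReal_iff_of_nonneg hm).1 hω
  -- on `{X = n}` with `n > m`, the factor `exp (t (n - m)) ≥ 1` turns the pmf into `p n`
  have hterm : ∀ n : ℕ, P {ω | X ω = n ∧ m < n} ≤ ENNReal.ofReal (p n) := by
    intro n
    by_cases hmn : m < n
    · simp only [hmn, and_true, hpmf, p]
      refine ENNReal.ofReal_le_ofReal (div_le_div_of_nonneg_right ?_ (by positivity))
      have hexp : Real.exp (-lam) ≤ Real.exp (-lam - t * m) * Real.exp (n * t) := by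
        rw [← Real.exp_add]
        gcongr
        nlinarith
      rw [mul_pow, ← Real.exp_nat_mul]
      linear_combination (lam ^ n) * hexp
    · simp [hmn]
  calc P {ω | ENNReal.ofReal m < X ω}
      ≤ P (⋃ n : ℕ, {ω | X ω = n ∧ m < n}) := measure_mono_ae hcover
    _ ≤ ∑' n : ℕ, ENNReal.ofReal (p n) := (measure_iUnion_le _).trans (ENNReal.tsum_le_tsum hterm)
    _ ≤ ENNReal.ofReal (Real.exp (lam * Real.exp t - t * m)) := by
        rw [← ENNReal.ofReal_tsum_of_nonneg (fun n => by positivity) hp.summable, hp.tsum_eq,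
          ← Real.exp_add]
        gcongr
        linarith

lemma measure_ofReal_lt_le_exp_neg_of_poisson (hX : Measurable X) (hlam : 0 ≤ lam)
    (hpmf : ∀ n : ℕ, P {ω | X ω = n} =
      ENNReal.ofReal (Real.exp (-lam) * lam ^ n / n.factorial))
    {m L : ℝ} (hL : 0 ≤ L) (hm : Real.exp (1 + L) * lam ≤ m) :
    P {ω | ENNReal.ofReal m < X ω} ≤ ENNReal.ofReal (Real.exp (-(L * m))) := by
  refine (measure_ofReal_lt_le_exp_of_poisson hX hlam hpmf (le_trans (by positivity) hm)
    (by positivity : 0 ≤ 1 + L)).trans ?_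
  gcongr
  linarith

end PoissonTail

lemma tsum_ofReal_exp_neg_add_natCast_le (a : ℝ) :
    ∑' k : ℕ, ENNReal.ofReal (Real.exp (-(a + k))) ≤ ENNReal.ofReal (Real.exp (1 - a)) := by
  have he : Real.exp (-1) < 1 := Real.exp_lt_one_iff.2 (by norm_num)
  have hsum := (hasSum_geometric_of_lt_one (Real.exp_nonneg (-1)) he).mul_left (Real.exp (-a))
  have hterm : ∀ k : ℕ, Real.exp (-(a + k)) = Real.exp (-a) * Real.exp (-1) ^ k := fun k => by
    rw [← Real.exp_nat_mul, ← Real.exp_add]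
    ring_nf
  have hratio : (1 - Real.exp (-1))⁻¹ ≤ Real.exp 1 := by
    rw [inv_le_iff_one_le_mul₀ (sub_pos.2 he), mul_sub, ← Real.exp_add]
    norm_num
    linarith [Real.add_one_le_exp 1]
  simp_rw [hterm]
  rw [← ENNReal.ofReal_tsum_of_nonneg (fun k => by positivity) hsum.summable, hsum.tsum_eq,
    sub_eq_neg_add 1 a, Real.exp_add (-a)]
  gcongr

section PoissonShells

open Module

variable {Ω E : Type*} [MeasurableSpace Ω] {P : Measure Ω} [IsProbabilityMeasure P]
  [NormedAddCommGroup E] [NormedSpace ℝ E] [MeasurableSpace E] [BorelSpace E]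
  [FiniteDimensional ℝ E] {μ : Measure E} [μ.IsAddHaarMeasure] {N : Ω → Measure E}

lemma measure_iUnion_dyadicShell_gt_le (hN : IsPoissonPP P N μ) {d : ℕ} (hE : finrank ℝ E = d)
    (hd : 0 < d) {R θ L : ℝ} (hR : 0 < R) (hL : 0 ≤ L)
    (hθ : Real.exp (1 + L) * ((μ (Metric.ball 0 1)).toReal * 2 ^ d * R ^ d) ≤ θ)
    (hLθ : 1 ≤ L * θ) :
    P (⋃ k : ℕ, {ω | ENNReal.ofReal (θ * (2 ^ k) ^ d) < N ω (dyadicShell R k)})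
      ≤ ENNReal.ofReal (Real.exp (1 - L * θ)) := by
  obtain ⟨hmeas, hpmf, -⟩ := hN
  have hshell : ∀ k : ℕ, P {ω | ENNReal.ofReal (θ * (2 ^ k) ^ d) < N ω (dyadicShell R k)}
      ≤ ENNReal.ofReal (Real.exp (-(L * θ + k))) := by
    intro k
    have hA := measurableSet_dyadicShell (E := E) R k
    have hfin : μ (dyadicShell R k) < ⊤ :=
      (measure_mono (dyadicShell_subset_ball R k)).trans_lt measure_ball_lt_top
    have hgrowth : (k : ℝ) + 1 ≤ (2 ^ k) ^ d :=
      calc (k : ℝ) + 1 ≤ 2 ^ k := by exact_mod_cast Nat.lt_two_pow_self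
        _ ≤ (2 ^ k) ^ d := le_self_pow₀ (one_le_pow₀ one_le_two) hd.ne'
    refine (measure_ofReal_lt_le_exp_neg_of_poisson (hmeas _ hA) ENNReal.toReal_nonneg
      (hpmf _ hA hfin) hL ?_).trans ?_
    · calc Real.exp (1 + L) * (μ (dyadicShell R k)).toReal
          ≤ Real.exp (1 + L) * ((μ (Metric.ball 0 1)).toReal * 2 ^ d * R ^ d * (2 ^ k) ^ d) := by
            gcongr
            exact measure_dyadicShell_toReal_le μ hE hR k
        _ ≤ θ * (2 ^ k) ^ d := by
            rw [← mul_assoc]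
            gcongr
    · gcongr
      nlinarith
  calc P (⋃ k : ℕ, {ω | ENNReal.ofReal (θ * (2 ^ k) ^ d) < N ω (dyadicShell R k)})
      ≤ ∑' k : ℕ, ENNReal.ofReal (Real.exp (-(L * θ + k))) :=
        (measure_iUnion_le _).trans (ENNReal.tsum_le_tsum hshell)
    _ ≤ ENNReal.ofReal (Real.exp (1 - L * θ)) := tsum_ofReal_exp_neg_add_natCast_le _

lemma measure_exists_tail_potential_gt_le (hN : IsPoissonPP P N μ) {d : ℕ}
    (hE : finrank ℝ E = d) (hd : 0 < d) {R γ ε L θ : ℝ} (hR : 0 < R) (hdγ : (d : ℝ) < γ)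
    (hε : 0 ≤ ε) (hL : 0 ≤ L) (hθε : θ = (1 - 2 ^ ((d : ℝ) - γ)) * ε * (R / 2) ^ γ)
    (hθ : Real.exp (1 + L) * ((μ (Metric.ball 0 1)).toReal * 2 ^ d * R ^ d) ≤ θ)
    (hLθ : 1 ≤ L * θ) :
    P {ω | ∃ y : E, ‖y‖ ≤ R / 2 ∧ ENNReal.ofReal ε <
        ∫⁻ z, (if ‖z‖ ≥ R then ENNReal.ofReal (‖y - z‖ ^ (-γ)) else 0) ∂(N ω)}
      ≤ ENNReal.ofReal (Real.exp (1 - L * θ)) := by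
  refine (measure_mono ?_).trans (measure_iUnion_dyadicShell_gt_le hN hE hd hR hL hθ hLθ)
  rintro ω ⟨y, hy, hgt⟩
  by_contra hω
  subst hθε
  exact hgt.not_ge (lintegral_tail_le_of_forall_dyadicShell_le (N ω) hR hdγ hε
    (fun k => not_lt.1 fun hk => hω (Set.mem_iUnion.2 ⟨k, hk⟩)) hy)

/-- With `c = 1 - 2 ^ (d - γ)` and `L = 5 * 2 ^ γ / c`, once `ε * R ^ (γ - d)` exceeds this constant
the shell thresholds `c * ε * (R / 2) ^ γ * 2 ^ (k * d)` dominate `exp (1 + L)` times the volumes of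
the balls `B(0, 2 ^ (k + 1) * R)` containing the shells. -/
noncomputable def tailPotentialConstant (v γ : ℝ) (d : ℕ) : ℝ :=
  Real.exp (1 + 5 * 2 ^ γ / (1 - 2 ^ ((d : ℝ) - γ))) * v * 2 ^ d * 2 ^ γ / (1 - 2 ^ ((d : ℝ) - γ))

lemma measure_exists_tail_potential_gt_le_exp_neg (hN : IsPoissonPP P N μ) {d : ℕ}
    (hE : finrank ℝ E = d) (hd : 0 < d) {γ ε R : ℝ} (hdγ : (d : ℝ) < γ) (hε : 0 < ε)
    (hR : 1 ≤ R)
    (hK : max 1 (tailPotentialConstant (μ (Metric.ball 0 1)).toReal γ d) < ε * R ^ (γ - d)) :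
    P {ω | ∃ y : E, ‖y‖ ≤ R / 2 ∧ ENNReal.ofReal ε <
        ∫⁻ z, (if ‖z‖ ≥ R then ENNReal.ofReal (‖y - z‖ ^ (-γ)) else 0) ∂(N ω)}
      ≤ ENNReal.ofReal (Real.exp (-4 * ε * R ^ γ)) := by
  set c : ℝ := 1 - 2 ^ ((d : ℝ) - γ)
  have hc : 0 < c := sub_pos.2 (Real.rpow_lt_one_of_one_lt_of_neg one_lt_two (by linarith))
  set v := (μ (Metric.ball 0 1)).toReal
  set L : ℝ := 5 * 2 ^ γ / c
  set K := tailPotentialConstant v γ d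
  have hR0 : 0 < R := by linarith
  have hεRγ : ε * R ^ γ = ε * R ^ (γ - d) * R ^ d := by
    rw [mul_assoc, ← Real.rpow_natCast, ← Real.rpow_add hR0, sub_add_cancel]
  have hs : 1 ≤ ε * R ^ γ := by
    rw [hεRγ]
    nlinarith [le_max_left 1 K, one_le_pow₀ (n := d) hR]
  have hθ : c * ε * (R / 2) ^ γ = c * (ε * R ^ γ) / 2 ^ γ := by
    rw [Real.div_rpow hR0.le zero_le_two]
    ring
  have hLθ : L * (c * ε * (R / 2) ^ γ) = 5 * (ε * R ^ γ) := by
    rw [hθ, show L = 5 * 2 ^ γ / c from rfl]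
    field_simp
  have hKθ : Real.exp (1 + L) * (v * 2 ^ d * R ^ d) ≤ c * ε * (R / 2) ^ γ := by
    have hKR : K * R ^ d ≤ ε * R ^ γ := by
      rw [hεRγ]
      gcongr
      exact (le_max_right _ _).trans hK.le
    rw [hθ, le_div_iff₀ (by positivity)]
    calc Real.exp (1 + L) * (v * 2 ^ d * R ^ d) * 2 ^ γ = c * (K * R ^ d) := by
          rw [show K = Real.exp (1 + L) * v * 2 ^ d * 2 ^ γ / c from rfl]
          field_simp
      _ ≤ c * (ε * R ^ γ) := by gcongr
  calc _ ≤ ENNReal.ofReal (Real.exp (1 - L * (c * ε * (R / 2) ^ γ))) :=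
        measure_exists_tail_potential_gt_le hN hE hd hR0 hdγ hε.le (by positivity) rfl hKθ
          (by linarith)
    _ ≤ ENNReal.ofReal (Real.exp (-4 * ε * R ^ γ)) := by
        rw [hLθ]
        gcongr
        linarith

end PoissonShells

lemma lt_mul_rpow_of_rpow_inv_mul_rpow_neg_inv_lt {K δ ε R : ℝ} (hK : 0 ≤ K) (hδ : 0 < δ)
    (hε : 0 < ε) (h : K ^ (1 / δ) * ε ^ (-1 / δ) < R) : K < ε * R ^ δ := by
  have h' := Real.rpow_lt_rpow (by positivity) h hδ
  rw [Real.mul_rpow (by positivity) (by positivity), ← Real.rpow_mul hK,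
    ← Real.rpow_mul hε.le, div_mul_cancel₀ _ hδ.ne', div_mul_cancel₀ _ hδ.ne', Real.rpow_one,
    Real.rpow_neg_one, ← div_eq_mul_inv, div_lt_iff₀' hε] at h'
  exact h'

/-- Tail estimate for the long-range Poissonian potential: for a unit-intensity
Poisson process on `ℝ^d` and `γ > d`, the sum `Σ_{ω_j ∉ B(0,R)} |y − ω_j|^{−γ}`,
uniformly over `y ∈ B(0,r)`, exceeds `ε` with exponentially small probability. -/
theorem stmt_19 {Ω : Type*} [MeasurableSpace Ω] (P : Measure Ω) [IsProbabilityMeasure P]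
    (d : ℕ) (hd : 1 ≤ d) (γ : ℝ) (hγ : γ > d)
    (N : Ω → Measure (EuclideanSpace ℝ (Fin d)))
    (hPPP : IsPoissonPP P N (volume : Measure (EuclideanSpace ℝ (Fin d))))
    (T : ℝ → EuclideanSpace ℝ (Fin d) → Ω → ℝ≥0∞)
    (hT : ∀ R y ω, T R y ω = ∫⁻ z : EuclideanSpace ℝ (Fin d),
        (if ‖z‖ ≥ R then ENNReal.ofReal (‖y - z‖ ^ (-γ)) else 0) ∂(N ω)) :
    ∃ C > (0:ℝ), ∀ ε > (0:ℝ), ∀ r > (1:ℝ), ∀ R : ℝ,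
      R > max (C * ε ^ (-1 / (γ - d))) (2 * r) →
      P {ω | ∃ y : EuclideanSpace ℝ (Fin d), ‖y‖ < r ∧ T R y ω > ENNReal.ofReal ε}
        ≤ ENNReal.ofReal (Real.exp (-4 * ε * R ^ γ)) := by
  set K := tailPotentialConstant (volume (Metric.ball (0 : EuclideanSpace ℝ (Fin d)) 1)).toReal γ d
  refine ⟨(max 1 K) ^ (1 / (γ - d)), by positivity, fun ε hε r hr R hR => ?_⟩
  have hRr : 2 * r < R := (le_max_right _ _).trans_lt hR
  have hεR : max 1 K < ε * R ^ (γ - d) := lt_mul_rpow_of_rpow_inv_mul_rpow_neg_inv_lt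
    (by positivity) (by linarith) hε ((le_max_left _ _).trans_lt hR)
  calc P {ω | ∃ y : EuclideanSpace ℝ (Fin d), ‖y‖ < r ∧ T R y ω > ENNReal.ofReal ε}
      ≤ P {ω | ∃ y : EuclideanSpace ℝ (Fin d), ‖y‖ ≤ R / 2 ∧ ENNReal.ofReal ε <
          ∫⁻ z, (if ‖z‖ ≥ R then ENNReal.ofReal (‖y - z‖ ^ (-γ)) else 0) ∂(N ω)} :=
        measure_mono fun ω ⟨y, hy, hTy⟩ => ⟨y, by linarith, hT R y ω ▸ hTy⟩
    _ ≤ ENNReal.ofReal (Real.exp (-4 * ε * R ^ γ)) :=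
        measure_exists_tail_potential_gt_le_exp_neg hPPP finrank_euclideanSpace_fin hd hγ hε
          (by linarith) hεR
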